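/- Suppose additionally that y < sqrt(1/3 - x^2) + sqrt(3)/3 (region R1_3). Let r = sqrt(x^2 + y^2) * sqrt((x + 1/2)^2 + (y - sqrt(3)/2)^2) / (2(y + sqrt(3)*x)) and R = sqrt(16*r^2 - 1). Then the configuration p : Fin 3 -> R^2 given by p 0 = (0,0), p 1 = (1/2, -R/2), p 2 = ((sqrt(3)*R + 1)/4, (sqrt(3) - R)/4) is a packing of 3 equal circles of radius r on the flat torus R^2/Lambda; that is, ||p i - p j + lambda|| >= 2r for all i, j in Fin 3 and all lambda in Lambda with (i ≠ j or lambda ≠ 0). -/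

import Mathlib

/-!
The three centres form an equilateral triangle of side `2r = √(R² + 1) / 2`, so the only
conditions left concern translates by nonzero lattice vectors. A translate by `m v₁ + n v₂` with
`|m| ≥ 2` or `|n| ≥ 2` has length at least `1 ≥ 2r`, which leaves nine translates for each pair of
centres. With `s = √3`, the region condition reads `s (x² + y²) ≤ 2y`, and the value of `R` is
exactly the one for which circle 2 touches circle 1 translated by `v₂`. After clearing the
denominator `s x + y` of `R`, the three other nearly tight contacts factor into products of
`y - s x`, `2y - s` and `s y + x - 1`, which are nonnegative on the region.
-/

noncomputable section

/-- The point `(a, b)` in the Euclidean plane. -/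
def pt (a b : ℝ) : EuclideanSpace ℝ (Fin 2) :=
  (WithLp.equiv 2 (Fin 2 → ℝ)).symm ![a, b]

/-- The lattice generated by `v1 = (1,0)` and `v2 = (x,y)`. -/
def TLat (x y : ℝ) : Set (EuclideanSpace ℝ (Fin 2)) :=
  {v | ∃ m n : ℤ, v = (m : ℝ) • pt 1 0 + (n : ℝ) • pt x y}

/-- `p` is a packing of `k` equal circles of radius `r` on the flat torus `ℝ²/Λ(x,y)`. -/
def IsPacking (x y : ℝ) {k : ℕ} (r : ℝ) (p : Fin k → EuclideanSpace ℝ (Fin 2)) : Prop :=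
  ∀ i j : Fin k, ∀ l ∈ TLat x y, (i ≠ j ∨ l ≠ 0) → 2 * r ≤ ‖p i - p j + l‖


lemma norm_pt (a b : ℝ) : ‖pt a b‖ = √(a ^ 2 + b ^ 2) := by
  simp [EuclideanSpace.norm_eq, pt, Fin.sum_univ_two]

lemma pt_sub_pt_add_lattice (a b c d m n x y : ℝ) :
    pt a b - pt c d + (m • pt 1 0 + n • pt x y) = pt (a - c + (m + n * x)) (b - d + n * y) := by
  ext i
  fin_cases i <;> simp [pt]

lemma isPacking_of_coords {k : ℕ} {x y r : ℝ} (a b : Fin k → ℝ)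
    (hlat : ∀ m n : ℤ, (m ≠ 0 ∨ n ≠ 0) → (2 * r) ^ 2 ≤ (m + n * x) ^ 2 + (n * y) ^ 2)
    (hpair : ∀ i j, i < j → ∀ m n : ℤ,
      (2 * r) ^ 2 ≤ (a i - a j + (m + n * x)) ^ 2 + (b i - b j + n * y) ^ 2) :
    IsPacking x y r fun i => pt (a i) (b i) := by
  rintro i j _ ⟨m, n, rfl⟩ hne
  rw [pt_sub_pt_add_lattice, norm_pt]
  refine Real.le_sqrt_of_sq_le ?_
  rcases lt_trichotomy i j with hij | rfl | hji
  · exact hpair i j hij m n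
  · have hmn : m ≠ 0 ∨ n ≠ 0 := by
      contrapose! hne
      simp [hne]
    simpa using hlat m n hmn
  · have := hpair j i hji (-m) (-n)
    push_cast at this
    linarith

lemma min_one_sq_le_sq_add_sq {x y : ℝ} {m n : ℤ} (hmn : m ≠ 0 ∨ n ≠ 0) :
    min 1 (y ^ 2) ≤ (m + n * x) ^ 2 + (n * y) ^ 2 := by
  have one_le_sq {k : ℤ} (hk : k ≠ 0) : (1 : ℝ) ≤ (k : ℝ) ^ 2 :=
    (one_le_sq_iff_one_le_abs _).2 (by exact_mod_cast Int.one_le_abs hk)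
  rcases eq_or_ne n 0 with rfl | hn
  · have hm := one_le_sq (by simpa using hmn)
    simp only [Int.cast_zero, zero_mul, add_zero]
    nlinarith [min_le_left 1 (y ^ 2)]
  · nlinarith [one_le_sq hn, min_le_right 1 (y ^ 2), sq_nonneg ((m : ℝ) + n * x), sq_nonneg y]

lemma one_le_sq_add_sq_of_one_lt_abs {c d x y : ℝ} {m n : ℤ} (hcx : |c| + |x| ≤ 1)
    (hdy : |d| + 1 ≤ 2 * |y|) (hmn : 1 < |m| ∨ 1 < |n|) :
    1 ≤ (c + (m + n * x)) ^ 2 + (d + n * y) ^ 2 := by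
  suffices 1 ≤ |c + (m + n * x)| ∨ 1 ≤ |d + n * y| by
    rcases this with h | h
    · nlinarith [(one_le_sq_iff_one_le_abs _).2 h, sq_nonneg (d + n * y)]
    · nlinarith [(one_le_sq_iff_one_le_abs _).2 h, sq_nonneg (c + (m + n * x))]
  by_cases hn : 1 < |n|
  · right
    have hn2 : (2 : ℝ) ≤ |(n : ℝ)| := by exact_mod_cast hn
    have := abs_add' ((n : ℝ) * y) d
    rw [abs_mul] at this
    nlinarith [abs_nonneg y]
  · left
    have hn1 : |(n : ℝ)| ≤ 1 := by exact_mod_cast not_lt.mp hn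
    have hm2 : (2 : ℝ) ≤ |(m : ℝ)| := by exact_mod_cast hmn.resolve_right hn
    have h1 := abs_add' (m : ℝ) (c + n * x)
    have h2 := abs_add_le c (n * x)
    rw [abs_mul] at h2
    rw [show c + n * x + m = c + (m + n * x) by ring] at h1
    nlinarith [abs_nonneg x]

lemma le_sq_add_sq_of_forall_abs_le_one {ρ c d x y : ℝ} (hρ : ρ ≤ 1) (hcx : |c| + |x| ≤ 1)
    (hdy : |d| + 1 ≤ 2 * |y|)
    (hnear : ∀ m n : ℤ, |m| ≤ 1 → |n| ≤ 1 → ρ ≤ (c + (m + n * x)) ^ 2 + (d + n * y) ^ 2)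
    (m n : ℤ) : ρ ≤ (c + (m + n * x)) ^ 2 + (d + n * y) ^ 2 := by
  by_cases hmn : |m| ≤ 1 ∧ |n| ≤ 1
  · exact hnear m n hmn.1 hmn.2
  · rw [not_and_or, not_le, not_le] at hmn
    exact hρ.trans (one_le_sq_add_sq_of_one_lt_abs hcx hdy hmn)

/-- The parameters of the theorem, with `s` standing for `√3`: `inside_circle` is the region
condition `y < √(1/3 - x²) + √3/3` after squaring, and `R_mul` is the closed form of
`R = √(16 r² - 1)`. -/
structure R1Data (s x y R : ℝ) : Prop where
  s_sq : s ^ 2 = 3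
  s_pos : 0 < s
  x_nonneg : 0 ≤ x
  x_le_half : x ≤ 1 / 2
  one_le_sq_add_sq : 1 ≤ x ^ 2 + y ^ 2
  inside_circle : s * (x ^ 2 + y ^ 2) ≤ 2 * y
  R_mul : R * (s * x + y) = 2 * (x ^ 2 + y ^ 2) + x - s * y

namespace R1Data

variable {s x y R : ℝ}

lemma s_le_two_mul_y (h : R1Data s x y R) : s ≤ 2 * y := by
  nlinarith [h.s_pos, h.one_le_sq_add_sq, h.inside_circle]

lemma s_mul_y_le_two (h : R1Data s x y R) : s * y ≤ 2 := by
  nlinarith [h.s_pos, h.s_sq, h.inside_circle, sq_nonneg x, h.s_le_two_mul_y]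

lemma y_le_s (h : R1Data s x y R) : y ≤ s := by
  nlinarith [h.s_pos, h.s_sq, h.s_mul_y_le_two]

lemma denom_pos (h : R1Data s x y R) : 0 < s * x + y := by
  nlinarith [h.s_pos, h.x_nonneg, h.s_le_two_mul_y]

lemma y_sub_s_mul_x_nonneg (h : R1Data s x y R) : 0 ≤ y - s * x := by
  nlinarith [h.s_pos, h.x_le_half, h.s_le_two_mul_y]

lemma R_nonneg (h : R1Data s x y R) : 0 ≤ R := by
  nlinarith [h.R_mul, h.denom_pos, h.one_le_sq_add_sq, h.x_nonneg, h.s_mul_y_le_two]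

lemma R_mul_s_le_one (h : R1Data s x y R) : R * s ≤ 1 := by
  refine le_of_mul_le_mul_right ?_ h.denom_pos
  linear_combination s * h.R_mul + 2 * h.inside_circle - y * h.s_sq

lemma le_min_one_sq (h : R1Data s x y R) : (R ^ 2 + 1) / 4 ≤ min 1 (y ^ 2) := by
  have : R ^ 2 ≤ 1 / 3 := by nlinarith [h.R_mul_s_le_one, h.R_nonneg, h.s_pos, h.s_sq]
  refine le_min (by linarith) ?_
  nlinarith [h.s_le_two_mul_y, h.s_pos, h.s_sq]

/- The next three inequalities are the slack in the contacts of circle 1 with circle 0 translated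
by `v₁ - v₂`, of circle 2 with circle 0 translated by `v₂`, and of circle 2 with circle 1
translated by `v₂ - v₁`. -/

lemma y_mul_R_le (h : R1Data s x y R) : y * R ≤ x ^ 2 + y ^ 2 - x := by
  have key : (x ^ 2 + y ^ 2 - x - y * R) * (s * x + y) =
      (y - s * x) * (x - x ^ 2 + s * y - y ^ 2) := by
    linear_combination (-y) * h.R_mul + x * y * h.s_sq
  have : 0 ≤ x - x ^ 2 + s * y - y ^ 2 := by
    nlinarith [mul_nonneg h.x_nonneg (by linarith [h.x_le_half] : (0 : ℝ) ≤ 1 - x), h.y_le_s,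
      h.s_le_two_mul_y, h.s_pos]
  nlinarith [h.denom_pos, mul_nonneg h.y_sub_s_mul_x_nonneg this]

lemma x_add_s_mul_y_le (h : R1Data s x y R) :
    x + s * y ≤ 2 * (x ^ 2 + y ^ 2) + R * (y - s * x) := by
  have key : (2 * (x ^ 2 + y ^ 2) - x - s * y + R * (y - s * x)) * (s * x + y) =
      2 * (x ^ 2 + y ^ 2) * (2 * y - s) := by
    linear_combination (y - s * x) * h.R_mul
  nlinarith [h.denom_pos, mul_nonneg (by positivity : (0 : ℝ) ≤ 2 * (x ^ 2 + y ^ 2))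
    (by linarith [h.s_le_two_mul_y] : (0 : ℝ) ≤ 2 * y - s)]

lemma four_mul_x_le (h : R1Data s x y R) : 4 * x ≤ s * R + 1 := by
  have key : (s * R - 4 * x + 1) * (s * x + y) = 2 * (y - s * x) * (s * y + x - 1) := by
    linear_combination s * h.R_mul + (2 * x * y - y) * h.s_sq
  have : 0 ≤ s * y + x - 1 := by nlinarith [h.s_pos, h.s_sq, h.s_le_two_mul_y, h.x_nonneg]
  nlinarith [h.denom_pos, mul_nonneg h.y_sub_s_mul_x_nonneg this]

lemma le_sq_add_sq_zero_one (h : R1Data s x y R) (m n : ℤ) :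
    (R ^ 2 + 1) / 4 ≤ (-(1 / 2) + (m + n * x)) ^ 2 + (R / 2 + n * y) ^ 2 := by
  have hR := h.R_nonneg
  have hs := h.s_pos
  refine le_sq_add_sq_of_forall_abs_le_one (h.le_min_one_sq.trans (min_le_left _ _)) ?_ ?_
    (fun m n hm hn => ?_) m n
  · rw [abs_of_neg (by norm_num), abs_of_nonneg h.x_nonneg]
    linarith [h.x_le_half]
  · rw [abs_of_nonneg (by positivity), abs_of_pos (by linarith [h.s_le_two_mul_y])]
    nlinarith [h.R_mul_s_le_one, h.s_le_two_mul_y, h.s_sq]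
  obtain ⟨hm0, hm1⟩ := abs_le.1 hm
  obtain ⟨hn0, hn1⟩ := abs_le.1 hn
  interval_cases m <;> interval_cases n <;> push_cast <;>
    nlinarith [h.y_mul_R_le, h.x_nonneg, h.x_le_half, h.s_le_two_mul_y, h.y_le_s,
      h.R_mul_s_le_one, h.one_le_sq_add_sq]

lemma le_sq_add_sq_zero_two (h : R1Data s x y R) (m n : ℤ) :
    (R ^ 2 + 1) / 4 ≤ (-((s * R + 1) / 4) + (m + n * x)) ^ 2 + ((R - s) / 4 + n * y) ^ 2 := by
  have hR := h.R_nonneg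
  have hs := h.s_pos
  have hRs := h.R_mul_s_le_one
  refine le_sq_add_sq_of_forall_abs_le_one (h.le_min_one_sq.trans (min_le_left _ _)) ?_ ?_
    (fun m n hm hn => ?_) m n
  · rw [abs_of_neg (by nlinarith), abs_of_nonneg h.x_nonneg]
    linarith [h.x_le_half]
  · rw [abs_of_nonpos (by nlinarith [h.s_sq]), abs_of_pos (by linarith [h.s_le_two_mul_y])]
    nlinarith [h.s_le_two_mul_y, h.s_sq]
  obtain ⟨hm0, hm1⟩ := abs_le.1 hm
  obtain ⟨hn0, hn1⟩ := abs_le.1 hn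
  interval_cases m <;> interval_cases n <;> push_cast <;>
    nlinarith [h.x_add_s_mul_y_le, h.x_nonneg, h.x_le_half, h.s_le_two_mul_y, h.y_le_s,
      h.one_le_sq_add_sq, h.s_sq]

lemma le_sq_add_sq_one_two (h : R1Data s x y R) (m n : ℤ) :
    (R ^ 2 + 1) / 4 ≤ ((1 - s * R) / 4 + (m + n * x)) ^ 2 + (-((R + s) / 4) + n * y) ^ 2 := by
  have hR := h.R_nonneg
  have hs := h.s_pos
  have hRs := h.R_mul_s_le_one
  refine le_sq_add_sq_of_forall_abs_le_one (h.le_min_one_sq.trans (min_le_left _ _)) ?_ ?_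
    (fun m n hm hn => ?_) m n
  · rw [abs_of_nonneg (by linarith), abs_of_nonneg h.x_nonneg]
    nlinarith [h.x_le_half]
  · rw [abs_of_neg (by linarith), abs_of_pos (by linarith [h.s_le_two_mul_y])]
    nlinarith [h.s_le_two_mul_y, h.s_sq]
  obtain ⟨hm0, hm1⟩ := abs_le.1 hm
  obtain ⟨hn0, hn1⟩ := abs_le.1 hn
  interval_cases m <;> interval_cases n <;> push_cast <;>
    nlinarith [h.four_mul_x_le, h.R_mul, h.x_nonneg, h.x_le_half, h.s_le_two_mul_y, h.y_le_s,
      h.one_le_sq_add_sq, h.s_sq]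

lemma isPacking (h : R1Data s x y R) {r : ℝ} (hr : 16 * r ^ 2 = R ^ 2 + 1) :
    IsPacking x y r ![pt 0 0, pt (1 / 2) (-R / 2), pt ((s * R + 1) / 4) ((s - R) / 4)] := by
  have hpts : ![pt 0 0, pt (1 / 2) (-R / 2), pt ((s * R + 1) / 4) ((s - R) / 4)] =
      fun i => pt (![0, 1 / 2, (s * R + 1) / 4] i) (![0, -R / 2, (s - R) / 4] i) := by
    funext i
    fin_cases i <;> rfl
  have h2r : (2 * r) ^ 2 = (R ^ 2 + 1) / 4 := by linarith
  rw [hpts]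
  refine isPacking_of_coords _ _ (fun m n hmn => ?_) fun i j hij m n => ?_ <;> rw [h2r]
  · exact h.le_min_one_sq.trans (min_one_sq_le_sq_add_sq hmn)
  fin_cases i <;> fin_cases j <;> simp only [Fin.isValue, Fin.zero_eta, Fin.mk_one,
    Fin.reduceFinMk, Fin.reduceLT, lt_self_iff_false, not_lt_zero, Fin.lt_one_iff, Fin.reduceEq,
    Matrix.cons_val_zero, Matrix.cons_val_one, Matrix.cons_val] at hij ⊢
  · linarith [h.le_sq_add_sq_zero_one m n]
  · linarith [h.le_sq_add_sq_zero_two m n]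
  · linarith [h.le_sq_add_sq_one_two m n]

end R1Data

lemma inside_circle_of_lt_sqrt {s x y : ℝ} (hs : s ^ 2 = 3) (hs0 : 0 < s) (hy : s / 3 ≤ y)
    (h : y < √(1 / 3 - x ^ 2) + s / 3) : s * (x ^ 2 + y ^ 2) < 2 * y := by
  have := (Real.lt_sqrt (by linarith)).1 (by linarith : y - s / 3 < √(1 / 3 - x ^ 2))
  nlinarith [mul_lt_mul_of_pos_left this hs0]

theorem three_circles_packing_R1 (x y : ℝ) (hxy : 1 ≤ x ^ 2 + y ^ 2) (hy : 0 < y) (hx0 : 0 ≤ x) (hx1 : x ≤ 1 / 2)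
    (hreg : y < Real.sqrt (1 / 3 - x ^ 2) + Real.sqrt 3 / 3)
    (r R : ℝ) (hr : r = Real.sqrt (x ^ 2 + y ^ 2) * Real.sqrt ((x + 1 / 2) ^ 2 + (y - Real.sqrt 3 / 2) ^ 2) / (2 * (y + Real.sqrt 3 * x)))
    (hR : R = Real.sqrt (16 * r ^ 2 - 1))
    : IsPacking x y r ![pt 0 0, pt (1 / 2) (-R / 2), pt ((Real.sqrt 3 * R + 1) / 4) ((Real.sqrt 3 - R) / 4)] := by
  set s := √3
  have hs : s ^ 2 = 3 := Real.sq_sqrt (by norm_num)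
  have hs0 : 0 < s := by positivity
  have hD : 0 < s * x + y := by positivity
  have hcirc := inside_circle_of_lt_sqrt hs hs0 (by nlinarith) hreg
  set N := 2 * (x ^ 2 + y ^ 2) + x - s * y
  have hN : 0 ≤ N := by nlinarith
  have hr16 : 16 * r ^ 2 = 1 + (N / (s * x + y)) ^ 2 := by
    -- Lagrange's identity for `v = (x, y)` and `v - (-1/2, s/2)`: `N / 2` is their dot product
    -- and `-(s x + y) / 2` their cross product.
    have lagrange : (s * x + y) ^ 2 + N ^ 2 =
        4 * (x ^ 2 + y ^ 2) * ((x + 1 / 2) ^ 2 + (y - s / 2) ^ 2) := by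
      ring
    rw [hr, div_pow, mul_pow, Real.sq_sqrt (by positivity), Real.sq_sqrt (by positivity)]
    field_simp
    linear_combination 4 * lagrange
  have hRN : R = N / (s * x + y) := by
    rw [hR, hr16, add_sub_cancel_left, Real.sqrt_sq (div_nonneg hN hD.le)]
  refine R1Data.isPacking ⟨hs, hs0, hx0, hx1, hxy, hcirc.le, ?_⟩ (by rw [hr16, hRN]; ring)
  rw [hRN, div_mul_cancel₀ _ hD.ne']
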